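/- arXiv:2405.06530 — 5 statements merged into one kernel-verified Lean document; each statement's English description precedes it below -/
import Mathlib

section
/- Let E be a real inner product space, m ≥ 2, let y₁, …, y_m ∈ E be points and σ₁, …, σ_m > 0 real numbers. Suppose i is an index with ‖y_j‖ ≤ ‖y_i‖ for all j, that y_i ≠ 0, and that y_j ≠ y_i for every j ≠ i. Then ⟨ Σ_{j≠i} σ_j (y_i − y_j)/‖y_i − y_j‖² , y_i/‖y_i‖ ⟩ ≥ (Σ_{j≠i} σ_j) / (2‖y_i‖); in particular ‖ Σ_{j≠i} σ_j (y_i − y_j)/‖y_i − y_j‖² ‖ ≥ (Σ_{j≠i} σ_j) / (2‖y_i‖). -/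
/-!
Since `y i` has maximal norm, `‖y i - y j‖² = ‖y i‖² - 2⟪y i, y j⟫ + ‖y j‖² ≤ 2⟪y i - y j, y i⟫`,
so each summand contributes at least `σ j / (2‖y i‖)` in the direction of `y i`;
Cauchy–Schwarz turns the inner-product bound into the norm bound.
-/

open scoped RealInnerProductSpace

section

variable {E : Type*} [NormedAddCommGroup E] [InnerProductSpace ℝ E]

theorem norm_sub_sq_le_two_mul_inner_sub_of_norm_le {x y : E} (h : ‖y‖ ≤ ‖x‖) :
    ‖x - y‖ ^ 2 ≤ 2 * ⟪x - y, x⟫ := by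
  have hsq : ‖y‖ ^ 2 ≤ ‖x‖ ^ 2 := pow_le_pow_left₀ (norm_nonneg y) h 2
  rw [norm_sub_sq_real, inner_sub_left, real_inner_self_eq_norm_sq, real_inner_comm]
  linarith

theorem norm_inv_norm_smul_le_one (x : E) : ‖‖x‖⁻¹ • x‖ ≤ 1 := by
  rcases eq_or_ne x 0 with rfl | hx
  · simp
  · exact (norm_smul_inv_norm hx).le

theorem inner_inv_norm_smul_le_norm (v x : E) : ⟪v, ‖x‖⁻¹ • x⟫ ≤ ‖v‖ :=
  calc ⟪v, ‖x‖⁻¹ • x⟫ ≤ ‖v‖ * ‖‖x‖⁻¹ • x‖ := real_inner_le_norm _ _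
    _ ≤ ‖v‖ := mul_le_of_le_one_right (norm_nonneg v) (norm_inv_norm_smul_le_one x)

theorem div_two_mul_norm_le_inner_smul_sub {x y : E} {σ : ℝ} (hσ : 0 ≤ σ) (hxy : x ≠ y)
    (h : ‖y‖ ≤ ‖x‖) :
    σ / (2 * ‖x‖) ≤ ⟪(σ / ‖x - y‖ ^ 2) • (x - y), ‖x‖⁻¹ • x⟫ := by
  have hd : ‖x - y‖ ≠ 0 := norm_ne_zero_iff.mpr (sub_ne_zero.mpr hxy)
  rw [real_inner_smul_left, real_inner_smul_right]
  calc σ / (2 * ‖x‖) = σ / ‖x - y‖ ^ 2 * (‖x‖⁻¹ * (‖x - y‖ ^ 2 / 2)) := by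
        field_simp
    _ ≤ σ / ‖x - y‖ ^ 2 * (‖x‖⁻¹ * ⟪x - y, x⟫) := by
        gcongr
        linarith [norm_sub_sq_le_two_mul_inner_sub_of_norm_le h]

end

theorem log_interaction_gradient_lower_bound_general
    {E : Type*} [NormedAddCommGroup E] [InnerProductSpace ℝ E]
    {m : ℕ} (y : Fin m → E) (σ : Fin m → ℝ) (hσ : ∀ j, 0 < σ j)
    (i : Fin m) (hmax : ∀ j, ‖y j‖ ≤ ‖y i‖)
    (hne : ∀ j, j ≠ i → y j ≠ y i) :
    (∑ j ∈ Finset.univ \ {i}, σ j) / (2 * ‖y i‖) ≤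
      ⟪∑ j ∈ Finset.univ \ {i}, (σ j / ‖y i - y j‖ ^ 2) • (y i - y j), ‖y i‖⁻¹ • y i⟫ ∧
    (∑ j ∈ Finset.univ \ {i}, σ j) / (2 * ‖y i‖) ≤
      ‖∑ j ∈ Finset.univ \ {i}, (σ j / ‖y i - y j‖ ^ 2) • (y i - y j)‖ := by
  have hinner : (∑ j ∈ Finset.univ \ {i}, σ j) / (2 * ‖y i‖) ≤
      ⟪∑ j ∈ Finset.univ \ {i}, (σ j / ‖y i - y j‖ ^ 2) • (y i - y j), ‖y i‖⁻¹ • y i⟫ := by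
    rw [sum_inner, Finset.sum_div]
    refine Finset.sum_le_sum fun j hj => ?_
    have hji : j ≠ i := (Finset.mem_sdiff.mp hj).2 ∘ Finset.mem_singleton.mpr
    exact div_two_mul_norm_le_inner_smul_sub (hσ j).le (hne j hji).symm (hmax j)
  exact ⟨hinner, hinner.trans (inner_inv_norm_smul_le_norm _ _)⟩

/-- Quantitative lower bound on the gradient of the logarithmic interaction term:
if `‖y j‖ ≤ ‖y i‖` for all `j`, `y i ≠ 0` and `y j ≠ y i` for `j ≠ i`, then
`⟨∑_{j≠i} σ_j (y_i − y_j)/‖y_i − y_j‖², y_i/‖y_i‖⟩ ≥ (∑_{j≠i} σ_j)/(2‖y_i‖)`,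
and in particular the norm of the sum obeys the same lower bound. -/
theorem log_interaction_gradient_lower_bound
    {E : Type*} [NormedAddCommGroup E] [InnerProductSpace ℝ E]
    {m : ℕ} (hm : 2 ≤ m) (y : Fin m → E) (σ : Fin m → ℝ) (hσ : ∀ j, 0 < σ j)
    (i : Fin m) (hmax : ∀ j, ‖y j‖ ≤ ‖y i‖) (hyi : y i ≠ 0)
    (hne : ∀ j, j ≠ i → y j ≠ y i) :
    (∑ j ∈ Finset.univ \ {i}, σ j) / (2 * ‖y i‖) ≤
      ⟪∑ j ∈ Finset.univ \ {i}, (σ j / ‖y i - y j‖ ^ 2) • (y i - y j), ‖y i‖⁻¹ • y i⟫ ∧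
    (∑ j ∈ Finset.univ \ {i}, σ j) / (2 * ‖y i‖) ≤
      ‖∑ j ∈ Finset.univ \ {i}, (σ j / ‖y i - y j‖ ^ 2) • (y i - y j)‖ :=
  log_interaction_gradient_lower_bound_general y σ hσ i hmax hne
end

section
/- The Lebesgue integral over the set {s ∈ ℝ : |s| ≥ 1} of the function s ↦ log(s²)·(s² − 1)/(s² + 1)² equals π. -/
/-!
On `1 ≤ s` the integrand has the elementary primitive `2 (arctan s - s log s / (s² + 1))`,
which increases from `π / 2` at `s = 1` to `π` at infinity; the integrand is even, so the
half-line `s ≤ -1` contributes the same `π / 2`.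
-/

open MeasureTheory Set Filter Topology

namespace MeasureTheory

theorem setIntegral_le_abs_comp_abs {f : ℝ → ℝ} {a : ℝ} (ha : 0 < a) :
    ∫ x in {x : ℝ | a ≤ |x|}, f |x| = 2 * ∫ x in Ioi a, f x := by
  have hsub : Ioi (0 : ℝ) ∩ Ici a = Ici a := inter_eq_right.mpr fun x hx ↦ ha.trans_le hx
  calc ∫ x in {x : ℝ | a ≤ |x|}, f |x|
      = ∫ x, (Ici a).indicator f |x| :=
        (integral_indicator (measurableSet_le measurable_const continuous_abs.measurable)).symm
    _ = 2 * ∫ x in Ioi 0, (Ici a).indicator f x := integral_comp_abs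
    _ = 2 * ∫ x in Ioi a, f x := by
        rw [setIntegral_indicator measurableSet_Ici, hsub, integral_Ici_eq_integral_Ioi]

end MeasureTheory

noncomputable section

namespace Real

def logSqKernel (s : ℝ) : ℝ := log (s ^ 2) * ((s ^ 2 - 1) / (s ^ 2 + 1) ^ 2)

def logSqKernelPrimitive (s : ℝ) : ℝ := 2 * (arctan s - s * log s / (s ^ 2 + 1))

theorem logSqKernel_abs (s : ℝ) : logSqKernel |s| = logSqKernel s := by
  simp only [logSqKernel, sq_abs]

theorem logSqKernel_nonneg (s : ℝ) : 0 ≤ logSqKernel s := by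
  -- `log (s²)` and `s² - 1` have the same sign
  rcases le_total 1 (s ^ 2) with h | h
  · exact mul_nonneg (log_nonneg h) (div_nonneg (by linarith) (by positivity))
  · exact mul_nonneg_of_nonpos_of_nonpos (log_nonpos (sq_nonneg s) h)
      (div_nonpos_of_nonpos_of_nonneg (by linarith) (by positivity))

theorem hasDerivAt_logSqKernelPrimitive {x : ℝ} (hx : x ≠ 0) :
    HasDerivAt logSqKernelPrimitive (logSqKernel x) x := by
  have hxlogx : HasDerivAt (fun s ↦ s * log s) (1 * log x + x * x⁻¹) x :=
    (hasDerivAt_id x).mul (hasDerivAt_log hx)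
  have hden : HasDerivAt (fun s : ℝ ↦ s ^ 2 + 1) (2 * x) x := by
    simpa using (hasDerivAt_pow 2 x).add_const 1
  refine (((hasDerivAt_arctan x).sub (hxlogx.div hden (by positivity))).const_mul 2).congr_deriv ?_
  rw [logSqKernel, log_pow]
  field_simp
  ring

theorem logSqKernelPrimitive_one : logSqKernelPrimitive 1 = π / 2 := by
  simp only [logSqKernelPrimitive, arctan_one, log_one]
  ring

theorem tendsto_logSqKernelPrimitive_atTop : Tendsto logSqKernelPrimitive atTop (𝓝 π) := by
  have hlog : Tendsto (fun s ↦ log s / s) atTop (𝓝 0) :=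
    isLittleO_log_id_atTop.tendsto_div_nhds_zero
  have hden : Tendsto (fun s : ℝ ↦ 1 + (s ^ 2)⁻¹) atTop (𝓝 1) := by
    simpa using tendsto_const_nhds.add
      (tendsto_inv_atTop_zero.comp (tendsto_pow_atTop (α := ℝ) two_ne_zero))
  have hquot : Tendsto (fun s ↦ s * log s / (s ^ 2 + 1)) atTop (𝓝 0) := by
    have := hlog.div hden one_ne_zero
    rw [zero_div] at this
    refine this.congr' ?_
    filter_upwards [eventually_gt_atTop 0] with s hs
    rw [Pi.div_apply]
    field_simp
  have := ((tendsto_arctan_atTop.mono_right nhdsWithin_le_nhds).sub hquot).const_mul 2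
  rwa [show 2 * (π / 2 - 0) = π by ring] at this

theorem integral_Ioi_one_logSqKernel : ∫ s in Ioi 1, logSqKernel s = π / 2 := by
  rw [integral_Ioi_of_hasDerivAt_of_nonneg'
    (fun x hx ↦ hasDerivAt_logSqKernelPrimitive (one_pos.trans_le hx).ne')
    (fun x _ ↦ logSqKernel_nonneg x) tendsto_logSqKernelPrimitive_atTop, logSqKernelPrimitive_one]
  ring

end Real

end

/-- `∫_{|s| ≥ 1} log(s²) (s² − 1)/(s² + 1)² ds = π`. -/
theorem integral_log_sq_mul_kernel_eq_pi :
    ∫ s in {s : ℝ | 1 ≤ |s|}, Real.log (s ^ 2) * ((s ^ 2 - 1) / (s ^ 2 + 1) ^ 2) = Real.pi := by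
  calc ∫ s in {s : ℝ | 1 ≤ |s|}, Real.log (s ^ 2) * ((s ^ 2 - 1) / (s ^ 2 + 1) ^ 2)
      = ∫ s in {s : ℝ | 1 ≤ |s|}, Real.logSqKernel |s| := by
        simp only [Real.logSqKernel_abs]
        rfl
    _ = 2 * ∫ s in Ioi 1, Real.logSqKernel s := setIntegral_le_abs_comp_abs one_pos
    _ = Real.pi := by rw [Real.integral_Ioi_one_logSqKernel]; ring
end

section
/- There exists a constant C > 0 such that for all ϱ ∈ (0,1], all a ∈ (0, ϱ], all b ∈ ℝ with |b| ≤ ϱ, and all s ≥ 1 satisfying a² + (ϱ·s + b)² ≥ 1, one has 0 ≤ log(√(a² + (ϱ·s + b)²)) · (s² − 1)/(s² + 1)² ≤ C · ϱ^{1/2} / s^{3/2}. -/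
/-!
With `t = ϱ s`, the hypotheses give `|a| ≤ t` and `|b| ≤ t`, so the radius
`√(a² + (t + b)²)` is at most `3t`, and its logarithm is at most
`log 3 + log t ≤ 2√t`. The rational factor `(s² - 1)/(s² + 1)²` lies in `[0, 1/s²]`,
and `2√(ϱ s)/s² = 2 ϱ^{1/2}/s^{3/2}`; hence the bound holds with `C = 2`.
-/

open Real

lemma Real.log_le_two_mul_sqrt_sub_two {x : ℝ} (hx : 0 < x) : log x ≤ 2 * √x - 2 := by
  have h := log_le_sub_one_of_pos (sqrt_pos.mpr hx)
  rw [log_sqrt hx.le] at h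
  linarith

lemma sqrt_sq_add_sq_add_le {a b t : ℝ} (ha : |a| ≤ t) (hb : |b| ≤ t) :
    √(a ^ 2 + (t + b) ^ 2) ≤ 3 * t := by
  obtain ⟨ha₁, ha₂⟩ := abs_le.mp ha
  obtain ⟨hb₁, hb₂⟩ := abs_le.mp hb
  rw [sqrt_le_iff]
  constructor <;> nlinarith

lemma log_sqrt_sq_add_sq_add_le {a b t : ℝ} (ht : 0 < t) (ha : |a| ≤ t) (hb : |b| ≤ t)
    (hR : 1 ≤ a ^ 2 + (t + b) ^ 2) :
    log √(a ^ 2 + (t + b) ^ 2) ≤ 2 * √t := by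
  have hlog3 : log 3 ≤ 2 := by linarith [log_le_sub_one_of_pos (by norm_num : (0 : ℝ) < 3)]
  calc log √(a ^ 2 + (t + b) ^ 2)
      ≤ log (3 * t) := log_le_log (by positivity) (sqrt_sq_add_sq_add_le ha hb)
    _ = log 3 + log t := log_mul (by norm_num) ht.ne'
    _ ≤ 2 * √t := by linarith [log_le_two_mul_sqrt_sub_two ht]

lemma sub_one_div_add_one_sq_nonneg {s : ℝ} (hs : 1 ≤ s) : 0 ≤ (s ^ 2 - 1) / (s ^ 2 + 1) ^ 2 :=
  div_nonneg (by nlinarith) (by positivity)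

lemma sub_one_div_add_one_sq_le_inv_sq (s : ℝ) : (s ^ 2 - 1) / (s ^ 2 + 1) ^ 2 ≤ 1 / s ^ 2 := by
  rcases eq_or_ne s 0 with rfl | hs
  · norm_num
  · rw [div_le_div_iff₀ (by positivity) (by positivity)]
    nlinarith [sq_nonneg s]

lemma sqrt_mul_div_sq {ϱ s : ℝ} (hs : 0 < s) :
    √(ϱ * s) / s ^ 2 = ϱ ^ ((1 : ℝ) / 2) / s ^ ((3 : ℝ) / 2) := by
  have hs32 : s ^ ((3 : ℝ) / 2) = s ^ 2 / √s := by
    rw [show (3 : ℝ) / 2 = (2 : ℕ) - 1 / 2 by norm_num, rpow_sub hs, rpow_natCast,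
      sqrt_eq_rpow]
  have hsqrt : √s ≠ 0 := (sqrt_pos.mpr hs).ne'
  rw [hs32, ← sqrt_eq_rpow, sqrt_mul' ϱ hs.le]
  field_simp

/-- Uniform pointwise tail bound: there is `C > 0` such that for all
`ϱ ∈ (0,1]`, `a ∈ (0,ϱ]`, `|b| ≤ ϱ`, and `s ≥ 1` with `a² + (ϱs + b)² ≥ 1`,
`0 ≤ log(√(a² + (ϱs + b)²)) (s² − 1)/(s² + 1)² ≤ C ϱ^{1/2}/s^{3/2}`. -/
theorem log_kernel_tail_bound :
    ∃ C > 0, ∀ ϱ a b s : ℝ, 0 < ϱ → ϱ ≤ 1 → 0 < a → a ≤ ϱ → |b| ≤ ϱ → 1 ≤ s →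
      1 ≤ a ^ 2 + (ϱ * s + b) ^ 2 →
      0 ≤ Real.log (Real.sqrt (a ^ 2 + (ϱ * s + b) ^ 2)) * ((s ^ 2 - 1) / (s ^ 2 + 1) ^ 2) ∧
      Real.log (Real.sqrt (a ^ 2 + (ϱ * s + b) ^ 2)) * ((s ^ 2 - 1) / (s ^ 2 + 1) ^ 2) ≤
        C * ϱ ^ ((1 : ℝ) / 2) / s ^ ((3 : ℝ) / 2) := by
  refine ⟨2, two_pos, fun ϱ a b s hϱ _ ha ha' hb hs hR => ?_⟩
  have hs₀ : 0 < s := one_pos.trans_le hs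
  have hϱs : ϱ ≤ ϱ * s := le_mul_of_one_le_right hϱ.le hs
  have hlog_nonneg : 0 ≤ log √(a ^ 2 + (ϱ * s + b) ^ 2) := log_nonneg (one_le_sqrt.mpr hR)
  have hq := sub_one_div_add_one_sq_nonneg hs
  refine ⟨mul_nonneg hlog_nonneg hq, ?_⟩
  calc log √(a ^ 2 + (ϱ * s + b) ^ 2) * ((s ^ 2 - 1) / (s ^ 2 + 1) ^ 2)
      ≤ 2 * √(ϱ * s) * (1 / s ^ 2) := by
        refine mul_le_mul (log_sqrt_sq_add_sq_add_le (mul_pos hϱ hs₀) ?_ (hb.trans hϱs) hR)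
          (sub_one_div_add_one_sq_le_inv_sq s) hq (by positivity)
        exact (abs_of_pos ha).trans_le (ha'.trans hϱs)
    _ = 2 * ϱ ^ ((1 : ℝ) / 2) / s ^ ((3 : ℝ) / 2) := by
        rw [mul_one_div, mul_div_assoc, sqrt_mul_div_sq hs₀, mul_div_assoc]
end

section
/- Let Ω ⊆ ℝⁿ be a bounded open set and f : Ω → ℝ a C² function such that ‖∇f(x)‖ → ∞ as dist(x, ∂Ω) → 0, and suppose every critical point of f is nondegenerate (at every x ∈ Ω with ∇f(x) = 0, the second derivative D²f(x) : ℝⁿ → (ℝⁿ)* is invertible). Then there exists ε > 0 such that every C² function g : Ω → ℝ with sup_{x ∈ Ω} ( ‖∇g(x) − ∇f(x)‖ + ‖D²g(x) − D²f(x)‖ ) < ε has only nondegenerate critical points in Ω; in particular, g is again a Morse function. -/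
/-
On the compact set `K` of points of `Ω` at distance at least `δ` from `∂Ω`, where `δ` is such
that `‖∇f‖ ≥ 1` off `K`, the continuous map `x ↦ (∇f(x), D²f(x))` takes values in the open set
of pairs `(a, A)` with `a ≠ 0` or `A` invertible. By compactness a uniform neighbourhood of the
image still lies in that open set, so any `g` that is uniformly `C²`-close to `f` has, at each
critical point in `K`, an invertible Hessian; off `K` the gradient of `g` cannot vanish at all.
-/

open Metric Set

section Bijective

variable {𝕜 E F : Type*} [NontriviallyNormedField 𝕜] [CompleteSpace 𝕜]
  [NormedAddCommGroup E] [NormedSpace 𝕜 E] [FiniteDimensional 𝕜 E]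
  [NormedAddCommGroup F] [NormedSpace 𝕜 F]

theorem ContinuousLinearMap.isOpen_setOf_bijective :
    IsOpen {A : E →L[𝕜] F | Function.Bijective A} := by
  have : CompleteSpace E := FiniteDimensional.complete 𝕜 E
  convert ContinuousLinearEquiv.isOpen (𝕜 := 𝕜) (E := E) (F := F) using 1
  ext A
  constructor
  · intro hA
    exact ⟨(LinearEquiv.ofBijective (A : E →ₗ[𝕜] F) hA).toContinuousLinearEquiv, rfl⟩
  · rintro ⟨e, rfl⟩
    exact e.bijective

theorem isOpen_setOf_ne_zero_or_bijective {G : Type*} [TopologicalSpace G] [T1Space G]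
    [Zero G] : IsOpen {p : G × (E →L[𝕜] F) | p.1 ≠ 0 ∨ Function.Bijective p.2} :=
  (isOpen_ne.preimage continuous_fst).union
    (ContinuousLinearMap.isOpen_setOf_bijective.preimage continuous_snd)

end Bijective

theorem IsCompact.exists_pos_forall_dist_lt_mem {X Y : Type*} [TopologicalSpace X]
    [PseudoMetricSpace Y] {K : Set X} {U : Set Y} {φ : X → Y} (hK : IsCompact K)
    (hφ : ContinuousOn φ K) (hU : IsOpen U) (hφU : MapsTo φ K U) :
    ∃ ε > 0, ∀ x ∈ K, ∀ y, dist y (φ x) < ε → y ∈ U := by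
  obtain ⟨ε, hε, hthick⟩ := (hK.image_of_continuousOn hφ).exists_thickening_subset_open hU
    hφU.image_subset
  exact ⟨ε, hε, fun x hx y hy => hthick (mem_thickening_iff.2 ⟨φ x, mem_image_of_mem φ hx, hy⟩)⟩

theorem isCompact_setOf_le_infDist_frontier {E : Type*} [PseudoMetricSpace E] [ProperSpace E]
    {Ω : Set E} (hΩo : IsOpen Ω) (hΩb : Bornology.IsBounded Ω) {δ : ℝ} (hδ : 0 < δ) :
    IsCompact {x ∈ Ω | δ ≤ infDist x (frontier Ω)} := by
  have hclosure : {x ∈ Ω | δ ≤ infDist x (frontier Ω)} =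
      closure Ω ∩ {x | δ ≤ infDist x (frontier Ω)} := by
    refine Subset.antisymm (fun x hx => ⟨subset_closure hx.1, hx.2⟩) fun x ⟨hxc, hxδ⟩ => ⟨?_, hxδ⟩
    by_contra hxΩ
    have hxfr : x ∈ frontier Ω := ⟨hxc, by rwa [hΩo.interior_eq]⟩
    linarith [infDist_zero_of_mem hxfr, show δ ≤ infDist x (frontier Ω) from hxδ]
  rw [hclosure]
  exact isCompact_of_isClosed_isBounded
    (isClosed_closure.inter (isClosed_le continuous_const (continuous_infDist_pt _)))
    (hΩb.closure.subset inter_subset_left)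

theorem morse_property_open_under_C2_perturbation_general
    {n : ℕ} (Ω : Set (Fin n → ℝ)) (hΩo : IsOpen Ω) (hΩb : Bornology.IsBounded Ω)
    (f' : (Fin n → ℝ) → ((Fin n → ℝ) →L[ℝ] ℝ))
    (f'' : (Fin n → ℝ) → ((Fin n → ℝ) →L[ℝ] ((Fin n → ℝ) →L[ℝ] ℝ)))
    (hf' : ∀ x ∈ Ω, HasFDerivAt f' (f'' x) x)
    (hf'' : ContinuousOn f'' Ω)
    (hblow : ∀ M > 0, ∃ δ > 0, ∀ x ∈ Ω, Metric.infDist x (frontier Ω) < δ → M ≤ ‖f' x‖)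
    (hnondeg : ∀ x ∈ Ω, f' x = 0 → Function.Bijective (f'' x)) :
    ∃ ε > 0, ∀ (g : (Fin n → ℝ) → ℝ) (g' : (Fin n → ℝ) → ((Fin n → ℝ) →L[ℝ] ℝ))
      (g'' : (Fin n → ℝ) → ((Fin n → ℝ) →L[ℝ] ((Fin n → ℝ) →L[ℝ] ℝ))),
      (∀ x ∈ Ω, HasFDerivAt g (g' x) x) →
      (∀ x ∈ Ω, HasFDerivAt g' (g'' x) x) →
      ContinuousOn g'' Ω →
      (∀ x ∈ Ω, ‖g' x - f' x‖ + ‖g'' x - f'' x‖ < ε) →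
      ∀ x ∈ Ω, g' x = 0 → Function.Bijective (g'' x) := by
  obtain ⟨δ, hδ, hfar⟩ := hblow 1 one_pos
  set K := {x ∈ Ω | δ ≤ infDist x (frontier Ω)}
  have hf'_cont : ContinuousOn f' Ω := fun x hx => (hf' x hx).continuousAt.continuousWithinAt
  have hK : IsCompact K := isCompact_setOf_le_infDist_frontier hΩo hΩb hδ
  have hmaps : MapsTo (fun x => (f' x, f'' x)) K {p | p.1 ≠ 0 ∨ Function.Bijective p.2} :=
    fun x hx => or_iff_not_imp_left.2 fun h => hnondeg x hx.1 (not_not.1 h)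
  obtain ⟨ε, hε, hstable⟩ := hK.exists_pos_forall_dist_lt_mem
    ((hf'_cont.prodMk hf'').mono (sep_subset _ _)) isOpen_setOf_ne_zero_or_bijective hmaps
  refine ⟨min ε 1, lt_min hε one_pos, fun g g' g'' _ _ _ hclose x hx hcrit => ?_⟩
  have hclose_x := hclose x hx
  have hdist : dist (g' x, g'' x) (f' x, f'' x) < ε := by
    rw [Prod.dist_eq, max_lt_iff, dist_eq_norm (g' x), dist_eq_norm (g'' x)]
    constructor <;>
      linarith [norm_nonneg (g' x - f' x), norm_nonneg (g'' x - f'' x), min_le_left ε 1]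
  have hxK : x ∈ K := by
    refine ⟨hx, not_lt.1 fun hfar_x => ?_⟩
    rw [hcrit, zero_sub, norm_neg] at hclose_x
    linarith [hfar x hx hfar_x, norm_nonneg (g'' x - f'' x), min_le_right ε 1]
  simpa [hcrit] using hstable x hxK _ hdist

/-- Stability of the Morse property under C² perturbation: if `f` is `C²` on a
bounded open `Ω ⊆ ℝⁿ`, `‖∇f(x)‖ → ∞` as `dist(x, ∂Ω) → 0`, and all critical
points of `f` are nondegenerate, then every `C²` function `g` with
`‖∇g − ∇f‖ + ‖D²g − D²f‖ < ε` on `Ω` has only nondegenerate critical points. -/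
theorem morse_property_open_under_C2_perturbation
    {n : ℕ} (Ω : Set (Fin n → ℝ)) (hΩo : IsOpen Ω) (hΩb : Bornology.IsBounded Ω)
    (f : (Fin n → ℝ) → ℝ) (f' : (Fin n → ℝ) → ((Fin n → ℝ) →L[ℝ] ℝ))
    (f'' : (Fin n → ℝ) → ((Fin n → ℝ) →L[ℝ] ((Fin n → ℝ) →L[ℝ] ℝ)))
    (hf : ∀ x ∈ Ω, HasFDerivAt f (f' x) x)
    (hf' : ∀ x ∈ Ω, HasFDerivAt f' (f'' x) x)
    (hf'' : ContinuousOn f'' Ω)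
    (hblow : ∀ M > 0, ∃ δ > 0, ∀ x ∈ Ω, Metric.infDist x (frontier Ω) < δ → M ≤ ‖f' x‖)
    (hnondeg : ∀ x ∈ Ω, f' x = 0 → Function.Bijective (f'' x)) :
    ∃ ε > 0, ∀ (g : (Fin n → ℝ) → ℝ) (g' : (Fin n → ℝ) → ((Fin n → ℝ) →L[ℝ] ℝ))
      (g'' : (Fin n → ℝ) → ((Fin n → ℝ) →L[ℝ] ((Fin n → ℝ) →L[ℝ] ℝ))),
      (∀ x ∈ Ω, HasFDerivAt g (g' x) x) →
      (∀ x ∈ Ω, HasFDerivAt g' (g'' x) x) →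
      ContinuousOn g'' Ω →
      (∀ x ∈ Ω, ‖g' x - f' x‖ + ‖g'' x - f'' x‖ < ε) →
      ∀ x ∈ Ω, g' x = 0 → Function.Bijective (g'' x) :=
  morse_property_open_under_C2_perturbation_general Ω hΩo hΩb f' f'' hf' hf'' hblow hnondeg
end

section
/- Let m ≥ 2, let σ₁, …, σ_m > 0 be real numbers, and let B ⊂ ℝ² be a bounded set. Define W on the set of pairwise distinct m-tuples y = (y₁, …, y_m) ∈ (ℝ²)^m by W(y) = Σ_{i≠j} σ_i σ_j · log( 1/‖y_i − y_j‖ ) (sum over ordered pairs i ≠ j). Then for every M > 0 there exists δ > 0 such that for every m-tuple of pairwise distinct points y₁, …, y_m ∈ B with min_{i≠j} ‖y_i − y_j‖ ≤ δ, the gradient of W at y (as a vector in (ℝ²)^m) has Euclidean norm at least M. -/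
/-!
Around a colliding pair `y i₀, y j₀` at distance `d`, pigeonhole over the scales `d * L ^ k`,
`k ≤ m`, gives a radius `t ≤ d * L ^ m` such that the cluster `S` of points within `t` of `y i₀`
is at distance `≥ (L - 1) * t` from all other points. Pair the gradient with the radial field
`y i - y i₀` on `S`. The virial terms `b i j = σ i σ j ⟪y i - y j, y i - y i₀⟫ / ‖y i - y j‖²`
satisfy `b i j + b j i = σ i * σ j`, so the interactions inside `S` contribute at least
`σ i₀ * σ j₀`, while those with the far points are `O(1 / L)`. The pairing is at most
`m * t * ‖∇W‖`, so `‖∇W‖ ≳ (min σ)² / (m * t)`, which blows up as `d → 0`.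
-/

open Finset
open scoped RealInnerProductSpace

theorem exists_threshold_gap {ι : Type*} [Fintype ι] (r : ι → ℝ) {θ : ℕ → ℝ}
    (hθ : Monotone θ) : ∃ k ≤ Fintype.card ι, ∀ j, r j ≤ θ (k + 1) → r j ≤ θ k := by
  by_contra! h
  have hcard : ∀ k ≤ Fintype.card ι + 1, k ≤ #{j | r j ≤ θ k} := by
    intro k
    induction k with
    | zero => simp
    | succ k ih =>
      intro hk
      obtain ⟨j, hj, hjk⟩ := h k (by omega)
      have hlt : #{j | r j ≤ θ k} < #{j | r j ≤ θ (k + 1)} := by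
        refine card_lt_card ((ssubset_iff_of_subset ?_).2 ⟨j, by simp [hj], by simp [hjk]⟩)
        intro i
        simpa using fun hi => hi.trans (hθ k.le_succ)
      have := ih (by omega)
      omega
  have := card_le_univ ({j | r j ≤ θ (Fintype.card ι + 1)} : Finset ι)
  have := hcard _ le_rfl
  omega

theorem exists_separated_scale {ι E : Type*} [Fintype ι] [SeminormedAddCommGroup E]
    (y : ι → E) (c : E) {d L : ℝ} (hd : 0 ≤ d) (hL : 1 ≤ L) :
    ∃ t ∈ Set.Icc d (d * L ^ Fintype.card ι), ∀ i j, ‖y i - c‖ ≤ t → t < ‖y j - c‖ →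
      (L - 1) * t < ‖y i - y j‖ := by
  have hθ : Monotone fun k : ℕ => d * L ^ k := fun a b hab =>
    mul_le_mul_of_nonneg_left (pow_le_pow_right₀ hL hab) hd
  obtain ⟨k, hk, hgap⟩ := exists_threshold_gap (fun j => ‖y j - c‖) hθ
  refine ⟨d * L ^ k, ⟨le_mul_of_one_le_right hd (one_le_pow₀ hL), hθ hk⟩, fun i j hi hj => ?_⟩
  have hfar : L * (d * L ^ k) < ‖y j - c‖ := by
    by_contra! h
    exact hj.not_ge (hgap j (by rw [pow_succ]; linarith))
  calc (L - 1) * (d * L ^ k) < ‖y j - c‖ - ‖y i - c‖ := by linarith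
    _ ≤ ‖(y j - c) - (y i - c)‖ := norm_sub_norm_le _ _
    _ = ‖y i - y j‖ := by rw [sub_sub_sub_cancel_right, norm_sub_rev]

theorem Finset.add_le_sum_sum_of_nonneg_add_swap {ι α : Type*} [AddCommGroup α] [LinearOrder α]
    [IsOrderedAddMonoid α] {s : Finset ι} {f : ι → ι → α}
    (hf : ∀ i ∈ s, ∀ j ∈ s, 0 ≤ f i j + f j i) {i j : ι} (hi : i ∈ s) (hj : j ∈ s)
    (hij : i ≠ j) : f i j + f j i ≤ ∑ a ∈ s, ∑ b ∈ s, f a b := by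
  have hsymm : ∑ p ∈ s ×ˢ s, (f p.1 p.2 + f p.2 p.1) = 2 • ∑ a ∈ s, ∑ b ∈ s, f a b := by
    simp only [sum_product, sum_add_distrib, two_nsmul]
    exact congrArg _ sum_comm
  have hpair := add_le_sum (f := fun p : ι × ι => f p.1 p.2 + f p.2 p.1) (i := (i, j))
    (j := (j, i))
    (fun p hp => hf _ (mem_product.1 hp).1 _ (mem_product.1 hp).2)
    (mem_product.2 ⟨hi, hj⟩) (mem_product.2 ⟨hj, hi⟩) (fun h => hij (congrArg Prod.fst h))
  rw [hsymm, add_comm (f j i), ← two_nsmul] at hpair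
  exact (nsmul_le_nsmul_iff_right two_ne_zero).1 hpair

section LogInteraction

variable {ι E : Type*} [NormedAddCommGroup E] [InnerProductSpace ℝ E]

noncomputable def pairVirial (σ : ι → ℝ) (y : ι → E) (c : E) (i j : ι) : ℝ :=
  σ i * σ j / ‖y i - y j‖ ^ 2 * ⟪y i - y j, y i - c⟫

noncomputable def logGradient [Fintype ι] [DecidableEq ι] (σ : ι → ℝ) (y : ι → E) :
    PiLp 2 (fun _ : ι => E) :=
  WithLp.toLp 2 fun i => (-2 * σ i) • ∑ j ∈ univ \ {i}, (σ j / ‖y i - y j‖ ^ 2) • (y i - y j)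

theorem PiLp.abs_sum_inner_apply_le [Fintype ι] {p : ENNReal} [Fact (1 ≤ p)]
    (x : PiLp p (fun _ : ι => E)) (v : ι → E) {S : Finset ι} {t : ℝ} (hv : ∀ i ∈ S, ‖v i‖ ≤ t) :
    |∑ i ∈ S, ⟪x i, v i⟫| ≤ #S * (‖x‖ * t) := by
  calc |∑ i ∈ S, ⟪x i, v i⟫| ≤ ∑ i ∈ S, ‖x‖ * t := (abs_sum_le_sum_abs _ _).trans <|
        sum_le_sum fun i hi => (abs_real_inner_le_norm _ _).trans <|
          mul_le_mul (PiLp.norm_apply_le x i) (hv i hi) (norm_nonneg _) (norm_nonneg _)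
    _ = #S * (‖x‖ * t) := by simp

section

variable (σ : ι → ℝ) (y : ι → E) (c : E)

@[simp]
theorem pairVirial_self (i : ι) : pairVirial σ y c i i = 0 := by
  simp [pairVirial]

theorem pairVirial_add_pairVirial_swap {i j : ι} (h : y i ≠ y j) :
    pairVirial σ y c i j + pairVirial σ y c j i = σ i * σ j := by
  have hne : ‖y i - y j‖ ≠ 0 := norm_ne_zero_iff.2 (sub_ne_zero.2 h)
  have hinner : ⟪y i - y j, y i - c⟫ - ⟪y i - y j, y j - c⟫ = ‖y i - y j‖ ^ 2 := by
    rw [← inner_sub_right, sub_sub_sub_cancel_right, real_inner_self_eq_norm_sq]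
  rw [pairVirial, pairVirial, norm_sub_rev (y j), ← neg_sub (y i) (y j), inner_neg_left]
  field_simp
  linear_combination σ i * σ j * hinner

theorem abs_pairVirial_le (i j : ι) :
    |pairVirial σ y c i j| ≤ |σ i * σ j| * ‖y i - c‖ / ‖y i - y j‖ := by
  rcases eq_or_ne ‖y i - y j‖ 0 with h | h
  · simp [pairVirial, h]
  rw [pairVirial, abs_mul, abs_div, abs_of_nonneg (sq_nonneg ‖y i - y j‖)]
  calc |σ i * σ j| / ‖y i - y j‖ ^ 2 * |⟪y i - y j, y i - c⟫|
      ≤ |σ i * σ j| / ‖y i - y j‖ ^ 2 * (‖y i - y j‖ * ‖y i - c‖) := by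
        gcongr; exact abs_real_inner_le_norm _ _
    _ = |σ i * σ j| * ‖y i - c‖ / ‖y i - y j‖ := by field_simp

theorem mul_le_sum_sum_pairVirial (hσ : ∀ i, 0 ≤ σ i) (hy : Function.Injective y)
    {S : Finset ι} {i j : ι} (hi : i ∈ S) (hj : j ∈ S) (hij : i ≠ j) :
    σ i * σ j ≤ ∑ a ∈ S, ∑ b ∈ S, pairVirial σ y c a b := by
  rw [← pairVirial_add_pairVirial_swap σ y c (hy.ne hij)]
  refine add_le_sum_sum_of_nonneg_add_swap (fun a _ b _ => ?_) hi hj hij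
  rcases eq_or_ne a b with rfl | hab
  · simp
  · rw [pairVirial_add_pairVirial_swap σ y c (hy.ne hab)]
    exact mul_nonneg (hσ a) (hσ b)

theorem abs_sum_sum_pairVirial_le {A t ρ : ℝ} (hA : ∀ i, |σ i| ≤ A) (hρ : 0 < ρ)
    {S T : Finset ι} (hS : ∀ i ∈ S, ‖y i - c‖ ≤ t) (hST : ∀ i ∈ S, ∀ j ∈ T, ρ ≤ ‖y i - y j‖) :
    |∑ i ∈ S, ∑ j ∈ T, pairVirial σ y c i j| ≤ #S * #T * (A ^ 2 * t / ρ) := by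
  have hterm : ∀ i ∈ S, ∀ j ∈ T, |pairVirial σ y c i j| ≤ A ^ 2 * t / ρ := fun i hi j hj => by
    have hσσ : |σ i * σ j| ≤ A ^ 2 := by
      rw [abs_mul, sq]
      exact mul_le_mul (hA i) (hA j) (abs_nonneg _) ((abs_nonneg _).trans (hA i))
    refine (abs_pairVirial_le σ y c i j).trans (div_le_div₀ ?_ ?_ hρ (hST i hi j hj))
    · exact mul_nonneg (sq_nonneg A) ((norm_nonneg _).trans (hS i hi))
    · exact mul_le_mul hσσ (hS i hi) (norm_nonneg _) (sq_nonneg A)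
  calc |∑ i ∈ S, ∑ j ∈ T, pairVirial σ y c i j|
      ≤ ∑ i ∈ S, ∑ j ∈ T, |pairVirial σ y c i j| :=
        (abs_sum_le_sum_abs _ _).trans (sum_le_sum fun i _ => abs_sum_le_sum_abs _ _)
    _ ≤ ∑ i ∈ S, ∑ j ∈ T, A ^ 2 * t / ρ := sum_le_sum fun i hi => sum_le_sum (hterm i hi)
    _ = #S * #T * (A ^ 2 * t / ρ) := by simp [mul_assoc]

variable [Fintype ι] [DecidableEq ι]

theorem inner_logGradient_apply (i : ι) :
    ⟪logGradient σ y i, y i - c⟫ = -2 * ∑ j, pairVirial σ y c i j := by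
  rw [sum_eq_add_sum_sdiff_singleton_of_mem (mem_univ i), pairVirial_self, zero_add]
  simp only [logGradient, PiLp.toLp_apply, real_inner_smul_left, sum_inner, mul_sum, pairVirial]
  refine sum_congr rfl fun j _ => ?_
  ring

theorem sum_inner_logGradient_apply (S : Finset ι) :
    ∑ i ∈ S, ⟪logGradient σ y i, y i - c⟫ =
      -2 * (∑ i ∈ S, ∑ j ∈ S, pairVirial σ y c i j + ∑ i ∈ S, ∑ j ∈ Sᶜ, pairVirial σ y c i j) := by
  simp only [inner_logGradient_apply, ← mul_sum, ← sum_add_distrib, sum_add_sum_compl]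

theorem le_card_mul_norm_logGradient (hσ : ∀ i, 0 ≤ σ i) {A : ℝ}
    (hA : ∀ i, σ i ≤ A) (hy : Function.Injective y) {t ρ : ℝ} (hρ : 0 < ρ)
    (hsep : ∀ i j, ‖y i - c‖ ≤ t → t < ‖y j - c‖ → ρ ≤ ‖y i - y j‖) {i₀ j₀ : ι} (hij : i₀ ≠ j₀)
    (hi₀ : ‖y i₀ - c‖ ≤ t) (hj₀ : ‖y j₀ - c‖ ≤ t) :
    2 * (σ i₀ * σ j₀) - 2 * Fintype.card ι ^ 2 * (A ^ 2 * t / ρ) ≤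
      Fintype.card ι * (‖logGradient σ y‖ * t) := by
  set S : Finset ι := {i | ‖y i - c‖ ≤ t}
  have hS : ∀ i ∈ S, ‖y i - c‖ ≤ t := fun i hi => (mem_filter.1 hi).2
  have hSc : ∀ i ∈ S, ∀ j ∈ Sᶜ, ρ ≤ ‖y i - y j‖ := fun i hi j hj =>
    hsep i j (hS i hi) (by simpa [S] using hj)
  have hnear := mul_le_sum_sum_pairVirial σ y c hσ hy
    (show i₀ ∈ S by simpa [S]) (show j₀ ∈ S by simpa [S]) hij
  have hfar := abs_sum_sum_pairVirial_le σ y c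
    (fun i => (abs_of_nonneg (hσ i)).trans_le (hA i)) hρ hS hSc
  have hgrad := PiLp.abs_sum_inner_apply_le (logGradient σ y) (fun i => y i - c) hS
  rw [sum_inner_logGradient_apply] at hgrad
  have hK : 0 ≤ A ^ 2 * t / ρ := by
    have := (norm_nonneg _).trans hi₀
    positivity
  have hcardS : (#S : ℝ) ≤ Fintype.card ι := by exact_mod_cast card_le_univ S
  have hcard : (#S : ℝ) * #Sᶜ ≤ Fintype.card ι ^ 2 := by
    rw [sq]; exact_mod_cast Nat.mul_le_mul (card_le_univ S) (card_le_univ Sᶜ)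
  have hfar' := mul_le_mul_of_nonneg_right hcard hK
  have hgrad' := mul_le_mul_of_nonneg_right hcardS
    (mul_nonneg (norm_nonneg (logGradient σ y)) ((norm_nonneg _).trans hi₀))
  rw [abs_le] at hfar hgrad
  linarith [hfar.1, hgrad.1]

end

variable [Fintype ι] [DecidableEq ι] (σ : ι → ℝ)

theorem sq_le_card_mul_norm_logGradient {a A : ℝ} (ha : 0 < a) (haσ : ∀ i, a ≤ σ i)
    (hσA : ∀ i, σ i ≤ A) {y : ι → E} (hy : Function.Injective y) {i₀ j₀ : ι} (hij : i₀ ≠ j₀) :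
    a ^ 2 ≤ Fintype.card ι * (‖logGradient σ y‖ *
      (‖y i₀ - y j₀‖ * (1 + 2 * Fintype.card ι ^ 2 * A ^ 2 / a ^ 2) ^ Fintype.card ι)) := by
  set n := Fintype.card ι
  set L := 1 + 2 * n ^ 2 * A ^ 2 / a ^ 2
  have hn : 0 < n := Fintype.card_pos_iff.2 ⟨i₀⟩
  have hA : 0 < A := ha.trans_le ((haσ i₀).trans (hσA i₀))
  have hL : 0 < L - 1 := by simp only [L, add_sub_cancel_left]; positivity
  obtain ⟨t, ⟨hdt, htL⟩, hsep⟩ :=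
    exists_separated_scale y (y i₀) (norm_nonneg (y i₀ - y j₀)) (show 1 ≤ L by linarith)
  have ht : 0 < t := (norm_pos_iff.2 (sub_ne_zero.2 (hy.ne hij))).trans_le hdt
  have hcluster := le_card_mul_norm_logGradient σ y (y i₀) (fun i => ha.le.trans (haσ i)) hσA hy
    (mul_pos hL ht) (fun i j hi hj => (hsep i j hi hj).le) hij (by simpa using ht.le)
    (by rwa [norm_sub_rev])
  have hfar_eq : 2 * n ^ 2 * (A ^ 2 * t / ((L - 1) * t)) = a ^ 2 := by
    simp only [L]; field_simp; ring
  have hσσ : a ^ 2 ≤ σ i₀ * σ j₀ := by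
    rw [sq]; exact mul_le_mul (haσ i₀) (haσ j₀) ha.le (ha.le.trans (haσ i₀))
  calc a ^ 2 ≤ n * (‖logGradient σ y‖ * t) := by linarith
    _ ≤ n * (‖logGradient σ y‖ * (‖y i₀ - y j₀‖ * L ^ n)) := by gcongr

theorem exists_pos_forall_le_norm_logGradient [Nonempty ι] (hσ : ∀ i, 0 < σ i) {M : ℝ}
    (hM : 0 < M) : ∃ δ > 0, ∀ y : ι → E, Function.Injective y →
      (∃ i j, i ≠ j ∧ ‖y i - y j‖ ≤ δ) → M ≤ ‖logGradient σ y‖ := by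
  set n := Fintype.card ι
  set a := univ.inf' univ_nonempty σ
  set A := univ.sup' univ_nonempty σ
  set L := 1 + 2 * n ^ 2 * A ^ 2 / a ^ 2
  have ha : 0 < a := (lt_inf'_iff _).2 fun i _ => hσ i
  have hL : 0 < L := by positivity
  have hn : 0 < n := Fintype.card_pos
  refine ⟨a ^ 2 / (n * M * L ^ n), by positivity, ?_⟩
  rintro y hy ⟨i₀, j₀, hij, hδ⟩
  have hconfig := sq_le_card_mul_norm_logGradient σ (A := A) ha (fun i => inf'_le σ (mem_univ i))
    (fun i => le_sup' σ (mem_univ i)) hy hij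
  refine le_of_mul_le_mul_left ?_ (pow_pos ha 2)
  calc a ^ 2 * M ≤ n * (‖logGradient σ y‖ * (a ^ 2 / (n * M * L ^ n) * L ^ n)) * M := by
        gcongr; exact hconfig.trans (by gcongr)
    _ = a ^ 2 * ‖logGradient σ y‖ := by field_simp

end LogInteraction

theorem gradient_blowup_on_collision_general
    {m : ℕ} (hm : 2 ≤ m) (σ : Fin m → ℝ) (hσ : ∀ i, 0 < σ i)
    (B : Set (EuclideanSpace ℝ (Fin 2))) :
    ∀ M > 0, ∃ δ > 0, ∀ y : Fin m → EuclideanSpace ℝ (Fin 2),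
      (∀ i, y i ∈ B) → Function.Injective y →
      (∃ i j, i ≠ j ∧ ‖y i - y j‖ ≤ δ) →
      M ≤ Real.sqrt (∑ i,
        ‖(-2 * σ i) • ∑ j ∈ Finset.univ \ {i}, (σ j / ‖y i - y j‖ ^ 2) • (y i - y j)‖ ^ 2) := by
  have : Nonempty (Fin m) := ⟨⟨0, by omega⟩⟩
  intro M hM
  obtain ⟨δ, hδ, hblowup⟩ :=
    exists_pos_forall_le_norm_logGradient (E := EuclideanSpace ℝ (Fin 2)) σ hσ hM
  exact ⟨δ, hδ, fun y _ hy hcoll => (hblowup y hy hcoll).trans_eq (PiLp.norm_eq_of_L2 _)⟩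

/-- Blow-up of the gradient of the logarithmic interaction energy
`W(y) = ∑_{i≠j} σ_i σ_j log(1/‖y_i − y_j‖)` as points in a bounded set `B ⊂ ℝ²`
collide: for every `M > 0` there is `δ > 0` such that whenever two of the
pairwise distinct points are at distance `≤ δ`, the Euclidean norm of the
gradient `(∇_{y_i}W(y))_i`, with `∇_{y_i}W(y) = −2σ_i ∑_{j≠i} σ_j (y_i − y_j)/‖y_i − y_j‖²`,
is at least `M`. -/
theorem gradient_blowup_on_collision
    {m : ℕ} (hm : 2 ≤ m) (σ : Fin m → ℝ) (hσ : ∀ i, 0 < σ i)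
    (B : Set (EuclideanSpace ℝ (Fin 2))) (hB : Bornology.IsBounded B) :
    ∀ M > 0, ∃ δ > 0, ∀ y : Fin m → EuclideanSpace ℝ (Fin 2),
      (∀ i, y i ∈ B) → Function.Injective y →
      (∃ i j, i ≠ j ∧ ‖y i - y j‖ ≤ δ) →
      M ≤ Real.sqrt (∑ i,
        ‖(-2 * σ i) • ∑ j ∈ Finset.univ \ {i}, (σ j / ‖y i - y j‖ ^ 2) • (y i - y j)‖ ^ 2) :=
  gradient_blowup_on_collision_general hm σ hσ B
end
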